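/- Let φ = (1+√5)/2, let J be the 5×5 real diagonal matrix diag(1,1,1,1,−φ), and let K ⊆ ℝ be the subfield ℚ(√5), i.e. the smallest subfield of ℝ containing √5. Then the set {g : gᵀ · J · g = J and every entry of g lies in K} is dense in the set {g : gᵀ · J · g = J} with respect to the standard topology on 5×5 real matrices. In other words, the K-points O(f, ℚ(√5)) of the orthogonal group of the quadratic form f = ⟨1,1,1,1,−φ⟩ are dense in its real points O(f, ℝ). -/

import Mathlib

set_option maxRecDepth 8000


open Matrix

/-- The golden ratio `φ = (1+√5)/2`. -/
noncomputable def goldenPhi : ℝ := (1 + Real.sqrt 5) / 2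

/-- The Gram matrix `diag(1,1,1,1,-φ)` of the quadratic form `f = ⟨1,1,1,1,-φ⟩`. -/
noncomputable def Jphi : Matrix (Fin 5) (Fin 5) ℝ :=
  Matrix.diagonal ![1, 1, 1, 1, -goldenPhi]

/-- The field `ℚ(√5)`, i.e. the smallest subfield of `ℝ` containing `√5`. -/
noncomputable def Qsqrt5 : Subfield ℝ := Subfield.closure {Real.sqrt 5}

section Aux

open Filter

lemma sqrt5_mem : Real.sqrt 5 ∈ Qsqrt5 :=
  Subfield.subset_closure (Set.mem_singleton _)

lemma phi_mem : goldenPhi ∈ Qsqrt5 := by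
  have h2 : (2:ℝ) ∈ Qsqrt5 := by
    have h1 := Subfield.one_mem Qsqrt5
    have := Subfield.add_mem _ h1 h1
    rw [one_add_one_eq_two] at this
    exact this
  exact Subfield.div_mem _ (Subfield.add_mem _ (Subfield.one_mem _) sqrt5_mem) h2

lemma phi_pos : 0 < goldenPhi := by
  unfold goldenPhi
  positivity

lemma dense_Qsqrt5 : Dense (Qsqrt5 : Set ℝ) := by
  refine Dense.mono ?_ Rat.denseRange_cast
  rintro _ ⟨q, rfl⟩
  exact SubfieldClass.ratCast_mem _ q

/-- Entrywise membership in `ℚ(√5)`. -/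
def MK (A : Matrix (Fin 5) (Fin 5) ℝ) : Prop := ∀ i j, A i j ∈ Qsqrt5

lemma MK.mul {A B : Matrix (Fin 5) (Fin 5) ℝ} (hA : MK A) (hB : MK B) : MK (A * B) := by
  intro i j
  rw [Matrix.mul_apply]
  exact Subfield.sum_mem _ fun k _ => Subfield.mul_mem _ (hA _ _) (hB _ _)

lemma MK.det {A : Matrix (Fin 5) (Fin 5) ℝ} (hA : MK A) : A.det ∈ Qsqrt5 := by
  rw [Matrix.det_apply]
  refine Subfield.sum_mem _ fun σ _ => ?_
  rw [Units.smul_def]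
  exact zsmul_mem (Subfield.prod_mem _ fun i _ => hA _ _) _

lemma MK.inv {A : Matrix (Fin 5) (Fin 5) ℝ} (hA : MK A) : MK A⁻¹ := by
  intro i j
  rw [Matrix.inv_def, Matrix.smul_apply, smul_eq_mul, Ring.inverse_eq_inv]
  refine Subfield.mul_mem _ (Subfield.inv_mem _ hA.det) ?_
  rw [Matrix.adjugate_apply]
  refine MK.det (fun a b => ?_)
  rw [Matrix.updateRow_apply]
  split
  · rw [Pi.single_apply]
    split
    · exact Subfield.one_mem _
    · exact Subfield.zero_mem _
  · exact hA a b

lemma MK.one : MK 1 := by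
  intro i j
  rw [Matrix.one_apply]
  split
  · exact Subfield.one_mem _
  · exact Subfield.zero_mem _

lemma MK.add {A B : Matrix (Fin 5) (Fin 5) ℝ} (hA : MK A) (hB : MK B) : MK (A + B) :=
  fun i j => Subfield.add_mem _ (hA i j) (hB i j)

lemma MK.sub {A B : Matrix (Fin 5) (Fin 5) ℝ} (hA : MK A) (hB : MK B) : MK (A - B) :=
  fun i j => Subfield.sub_mem _ (hA i j) (hB i j)

lemma MK.Jmat : MK Jphi := by
  intro i j
  rw [Jphi, Matrix.diagonal_apply]
  split
  · fin_cases i <;> simp <;>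
      first
        | exact Subfield.one_mem _
        | exact phi_mem
  · exact Subfield.zero_mem _

lemma det_Jphi : Jphi.det = -goldenPhi := by
  rw [Jphi, Matrix.det_diagonal, Fin.prod_univ_five]
  simp

lemma det_Jphi_unit : IsUnit Jphi.det := by
  rw [det_Jphi]
  exact isUnit_iff_ne_zero.2 (neg_ne_zero.2 (ne_of_gt phi_pos))

lemma Jphi_symm : Jphiᵀ = Jphi := Matrix.diagonal_transpose _

lemma Jphi_inv_symm : (Jphi⁻¹)ᵀ = Jphi⁻¹ := by
  rw [Matrix.transpose_nonsing_inv, Jphi_symm]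

lemma Jphi_mul_inv : Jphi * Jphi⁻¹ = 1 := Matrix.mul_nonsing_inv _ det_Jphi_unit

lemma Jphi_inv_mul : Jphi⁻¹ * Jphi = 1 := Matrix.nonsing_inv_mul _ det_Jphi_unit

/-- Cayley transform of a `J`-skew matrix lies in the orthogonal group. -/
lemma cayley_orthogonal {S : Matrix (Fin 5) (Fin 5) ℝ}
    (hskew : Sᵀ * Jphi = -(Jphi * S)) (hdet : IsUnit (1 + S).det) :
    ((1 - S) * (1 + S)⁻¹)ᵀ * Jphi * ((1 - S) * (1 + S)⁻¹) = Jphi := by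
  have hdetT : IsUnit ((1 + S)ᵀ).det := by rwa [Matrix.det_transpose]
  have h1 : (1 - S)ᵀ * Jphi = Jphi * (1 + S) := by
    rw [Matrix.transpose_sub, Matrix.transpose_one, sub_mul, one_mul, hskew, sub_neg_eq_add,
      mul_add, mul_one]
  have h2 : (1 + S)ᵀ * Jphi = Jphi * (1 - S) := by
    rw [Matrix.transpose_add, Matrix.transpose_one, add_mul, one_mul, hskew, mul_sub, mul_one,
      ← sub_eq_add_neg]
  have comm : (1 + S) * (1 - S) = (1 - S) * (1 + S) := by noncomm_ring
  have main : (1 - S)ᵀ * Jphi * (1 - S) = (1 + S)ᵀ * Jphi * (1 + S) := by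
    rw [h1, h2, Matrix.mul_assoc, Matrix.mul_assoc, comm]
  calc ((1 - S) * (1 + S)⁻¹)ᵀ * Jphi * ((1 - S) * (1 + S)⁻¹)
      = ((1 + S)⁻¹)ᵀ * ((1 - S)ᵀ * Jphi * (1 - S)) * (1 + S)⁻¹ := by
        rw [Matrix.transpose_mul]
        simp only [Matrix.mul_assoc]
    _ = ((1 + S)⁻¹)ᵀ * ((1 + S)ᵀ * Jphi * (1 + S)) * (1 + S)⁻¹ := by rw [main]
    _ = (((1 + S)⁻¹)ᵀ * (1 + S)ᵀ) * Jphi * ((1 + S) * (1 + S)⁻¹) := by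
        simp only [Matrix.mul_assoc]
    _ = Jphi := by
        rw [← Matrix.transpose_mul, Matrix.mul_nonsing_inv _ hdet, Matrix.transpose_one,
          one_mul, mul_one]

/-- Inverse Cayley transform: any orthogonal `g` with `1 + g` invertible arises as a
Cayley transform of a `J`-skew matrix. -/
lemma cayley_inverse {g : Matrix (Fin 5) (Fin 5) ℝ} (hg : gᵀ * Jphi * g = Jphi)
    (hdet : IsUnit (1 + g).det) :
    ((1 - g) * (1 + g)⁻¹)ᵀ * Jphi = -(Jphi * ((1 - g) * (1 + g)⁻¹)) ∧
    IsUnit (1 + (1 - g) * (1 + g)⁻¹).det ∧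
    (1 - (1 - g) * (1 + g)⁻¹) * (1 + (1 - g) * (1 + g)⁻¹)⁻¹ = g := by
  set S := (1 - g) * (1 + g)⁻¹ with hSdef
  have h1S : 1 + S = (2:ℝ) • (1 + g)⁻¹ := by
    calc 1 + S = (1 + g) * (1 + g)⁻¹ + (1 - g) * (1 + g)⁻¹ := by
          rw [Matrix.mul_nonsing_inv _ hdet]
      _ = ((1 + g) + (1 - g)) * (1 + g)⁻¹ := (add_mul _ _ _).symm
      _ = ((2:ℝ) • (1 : Matrix (Fin 5) (Fin 5) ℝ)) * (1 + g)⁻¹ := by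
          rw [show (1 + g) + (1 - g) = (2:ℝ) • (1 : Matrix (Fin 5) (Fin 5) ℝ) by
            rw [two_smul]; abel]
      _ = (2:ℝ) • (1 + g)⁻¹ := by rw [Matrix.smul_mul, one_mul]
  have hm1S : 1 - S = ((2:ℝ) • g) * (1 + g)⁻¹ := by
    calc 1 - S = (1 + g) * (1 + g)⁻¹ - (1 - g) * (1 + g)⁻¹ := by
          rw [Matrix.mul_nonsing_inv _ hdet]
      _ = ((1 + g) - (1 - g)) * (1 + g)⁻¹ := (sub_mul _ _ _).symm
      _ = ((2:ℝ) • g) * (1 + g)⁻¹ := by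
          rw [show (1 + g) - (1 - g) = (2:ℝ) • g by rw [two_smul]; abel]
  have hdetS : IsUnit (1 + S).det := by
    rw [h1S, Matrix.det_smul]
    exact IsUnit.mul (isUnit_iff_ne_zero.2 (by norm_num))
      (Matrix.isUnit_nonsing_inv_det _ hdet)
  have hcg : (1 - S) * (1 + S)⁻¹ = g := by
    have hgS : 1 - S = g * (1 + S) := by
      rw [h1S, hm1S, Matrix.mul_smul, Matrix.smul_mul]
    rw [hgS, Matrix.mul_nonsing_inv_cancel_right _ _ hdetS]
  have hdetTg : IsUnit (1 + gᵀ).det := by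
    rw [show (1 : Matrix (Fin 5) (Fin 5) ℝ) + gᵀ = (1 + g)ᵀ by
      rw [Matrix.transpose_add, Matrix.transpose_one], Matrix.det_transpose]
    exact hdet
  have claim : (1 - gᵀ) * Jphi * (1 + g) = -((1 + gᵀ) * Jphi * (1 - g)) := by
    have e1 : (1 - gᵀ) * Jphi * (1 + g)
        = Jphi + Jphi * g - gᵀ * Jphi - gᵀ * Jphi * g := by noncomm_ring
    have e2 : (1 + gᵀ) * Jphi * (1 - g)
        = Jphi - Jphi * g + gᵀ * Jphi - gᵀ * Jphi * g := by noncomm_ring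
    rw [e1, e2, hg]
    abel
  have hskew : Sᵀ * Jphi = -(Jphi * S) := by
    have hT : Sᵀ = (1 + gᵀ)⁻¹ * (1 - gᵀ) := by
      rw [hSdef, Matrix.transpose_mul, Matrix.transpose_nonsing_inv, Matrix.transpose_add,
        Matrix.transpose_sub, Matrix.transpose_one]
    have c2 : (1 - gᵀ) * Jphi = (1 + gᵀ) * (-(Jphi * S)) := by
      have h3 : (1 - gᵀ) * Jphi * (1 + g) * (1 + g)⁻¹
          = -((1 + gᵀ) * Jphi * (1 - g)) * (1 + g)⁻¹ := by rw [claim]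
      rw [Matrix.mul_nonsing_inv_cancel_right _ _ hdet] at h3
      rw [h3, Matrix.neg_mul, Matrix.mul_neg]
      congr 1
      simp only [Matrix.mul_assoc]
      rfl
    rw [hT, Matrix.mul_assoc, c2, Matrix.nonsing_inv_mul_cancel_left _ _ hdetTg]
  exact ⟨hskew, hdetS, hcg⟩

/-- Multilinearity of the determinant: some `±1` diagonal perturbation of an invertible
matrix has nonzero determinant. -/
lemma exists_sign_det (g : Matrix (Fin 5) (Fin 5) ℝ) (hg : g.det ≠ 0) :
    ∃ d : Fin 5 → ℝ, (∀ i, d i = 1 ∨ d i = -1) ∧ (Matrix.diagonal d + g).det ≠ 0 := by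
  by_contra hcon
  push_neg at hcon
  have key : ∀ s : Finset (Fin 5), ∀ d : Fin 5 → ℝ, (∀ i ∈ s, d i = 0) →
      (∀ i ∉ s, d i = 1 ∨ d i = -1) → (Matrix.diagonal d + g).det = 0 := by
    intro s
    induction s using Finset.induction_on with
    | empty =>
      intro d _ hs
      exact hcon d (fun i => hs i (Finset.notMem_empty i))
    | @insert i s hi ih =>
      intro d h0 hs
      have hdi : d i = 0 := h0 i (Finset.mem_insert_self i s)
      have hdup : ∀ c : ℝ, Matrix.diagonal (Function.update d i c) + g
          = (Matrix.diagonal d + g).updateRow i (c • Pi.single (M := fun _ : Fin 5 => ℝ) i 1 + g i) := by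
        intro c
        ext a b
        rw [Matrix.add_apply, Matrix.updateRow_apply]
        by_cases hab : a = i
        · subst hab
          simp only [if_pos rfl, Matrix.diagonal_apply, Function.update_apply,
            Pi.add_apply, Pi.smul_apply, Pi.single_apply, smul_eq_mul]
          by_cases hb : a = b
          · subst hb; simp
          · simp [hb, Ne.symm hb]
        · simp only [if_neg hab, Matrix.diagonal_apply, Matrix.add_apply,
            Function.update_apply, if_neg hab]
      have hdet_affine : ∀ c : ℝ, (Matrix.diagonal (Function.update d i c) + g).det
          = c * ((Matrix.diagonal d + g).updateRow i (Pi.single (M := fun _ : Fin 5 => ℝ) i 1)).det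
            + ((Matrix.diagonal d + g).updateRow i (g i)).det := by
        intro c
        rw [hdup c, Matrix.det_updateRow_add, Matrix.det_updateRow_smul]
      have hup : ∀ c : ℝ, (c = 1 ∨ c = -1) →
          (Matrix.diagonal (Function.update d i c) + g).det = 0 := by
        intro c hc
        refine ih (Function.update d i c) (fun j hj => ?_) (fun j hj => ?_)
        · have hji : j ≠ i := fun h => hi (h ▸ hj)
          rw [Function.update_apply, if_neg hji]
          exact h0 j (Finset.mem_insert_of_mem hj)
        · by_cases hji : j = i
          · subst hji; rw [Function.update_self]; exact hc
          · rw [Function.update_apply, if_neg hji]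
            exact hs j (fun hmem => by
              rcases Finset.mem_insert.1 hmem with h | h
              · exact hji h
              · exact hj h)
      have hplus := hup 1 (Or.inl rfl)
      have hminus := hup (-1) (Or.inr rfl)
      rw [hdet_affine] at hplus hminus
      have hzero := hdet_affine 0
      rw [Function.update_eq_self_iff.2 hdi.symm] at hzero
      rw [hzero]
      linarith
  have := key Finset.univ (fun _ => 0) (fun _ _ => rfl) (fun i hi => absurd (Finset.mem_univ i) hi)
  rw [show Matrix.diagonal (fun _ => (0:ℝ)) = 0 from Matrix.diagonal_zero, zero_add] at this
  exact hg this

/-- Conjugating an orthogonal matrix by a sign-diagonal matrix stays orthogonal. -/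
lemma sign_mul_orthogonal {d : Fin 5 → ℝ} (hd : ∀ i, d i = 1 ∨ d i = -1)
    {c : Matrix (Fin 5) (Fin 5) ℝ} (hc : cᵀ * Jphi * c = Jphi) :
    (Matrix.diagonal d * c)ᵀ * Jphi * (Matrix.diagonal d * c) = Jphi := by
  have hDJD : Matrix.diagonal d * Jphi * Matrix.diagonal d = Jphi := by
    rw [Jphi, Matrix.diagonal_mul_diagonal, Matrix.diagonal_mul_diagonal]
    have hvec : (fun i => d i * ![1, 1, 1, 1, -goldenPhi] i * d i) = ![1, 1, 1, 1, -goldenPhi] := by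
      funext i
      rcases hd i with h | h <;> simp [h]
    rw [hvec]
  calc (Matrix.diagonal d * c)ᵀ * Jphi * (Matrix.diagonal d * c)
      = cᵀ * (Matrix.diagonal d * Jphi * Matrix.diagonal d) * c := by
        rw [Matrix.transpose_mul, Matrix.diagonal_transpose]
        simp only [Matrix.mul_assoc]
    _ = Jphi := by rw [hDJD, hc]

end Aux

/-- The `ℚ(√5)`-points `O(f, ℚ(√5))` of the orthogonal group of the quadratic form
`f = ⟨1,1,1,1,-φ⟩` are dense in its real points `O(f, ℝ)`. -/
theorem Ofpoints_dense :
    ∀ g : Matrix (Fin 5) (Fin 5) ℝ, gᵀ * Jphi * g = Jphi →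
      g ∈ closure {h : Matrix (Fin 5) (Fin 5) ℝ |
        hᵀ * Jphi * h = Jphi ∧ ∀ i j, h i j ∈ Qsqrt5} := by
  intro g hg
  classical
  -- `g` is invertible
  have hdetg : g.det ≠ 0 := by
    intro h0
    have h3 := congrArg Matrix.det hg
    simp only [Matrix.det_mul, Matrix.det_transpose, h0] at h3
    simp at h3
    exact det_Jphi_unit.ne_zero h3.symm
  -- choose a sign-diagonal matrix `D` with `det (D + g) ≠ 0`
  obtain ⟨d, hd, hdetDg⟩ := exists_sign_det g hdetg
  set D := Matrix.diagonal d with hDdef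
  have hD2 : D * D = 1 := by
    rw [hDdef, Matrix.diagonal_mul_diagonal, ← Matrix.diagonal_one]
    have hvec : (fun i => d i * d i) = fun _ => (1:ℝ) := by
      funext i
      rcases hd i with h | h <;> simp [h]
    rw [hvec]
  have hdetD : IsUnit D.det := by
    rw [hDdef, Matrix.det_diagonal]
    refine isUnit_iff_ne_zero.2 (Finset.prod_ne_zero_iff.2 fun i _ => ?_)
    rcases hd i with h | h <;> rw [h] <;> norm_num
  set g₁ := D * g with hg₁def
  have hg₁ : g₁ᵀ * Jphi * g₁ = Jphi := sign_mul_orthogonal hd hg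
  have hdet₁ : IsUnit (1 + g₁).det := by
    have h1 : 1 + g₁ = D * (D + g) := by rw [hg₁def, mul_add, hD2]
    rw [h1, Matrix.det_mul]
    exact hdetD.mul (isUnit_iff_ne_zero.2 hdetDg)
  obtain ⟨hskew, hdetS, hcS⟩ := cayley_inverse hg₁ hdet₁
  set S := (1 - g₁) * (1 + g₁)⁻¹ with hSdef
  set A := Jphi * S with hAdef
  have hskewA : Aᵀ = -A := by
    rw [hAdef, Matrix.transpose_mul, Jphi_symm]
    -- Sᵀ * Jphi = -(Jphi * S)
    exact hskew
  have hJA : Jphi⁻¹ * A = S := by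
    rw [hAdef, ← Matrix.mul_assoc, Jphi_inv_mul, one_mul]
  -- choose entrywise approximating sequences in `ℚ(√5)`
  have hex : ∀ i j : Fin 5, ∃ u : ℕ → ℝ, (∀ n, u n ∈ Qsqrt5) ∧
      Filter.Tendsto u Filter.atTop (nhds (A i j)) :=
    fun i j => mem_closure_iff_seq_limit.1 (dense_Qsqrt5 (A i j))
  choose b hbK hbT using hex
  -- skew-symmetrized approximations
  set A' : ℕ → Matrix (Fin 5) (Fin 5) ℝ :=
    fun n => Matrix.of fun i j => (b i j n - b j i n) / 2 with hA'def
  have hA'K : ∀ n, MK (A' n) := by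
    intro n i j
    exact Subfield.div_mem _ (Subfield.sub_mem _ (hbK i j n) (hbK j i n))
      (by
        have h1 := Subfield.one_mem Qsqrt5
        have := Subfield.add_mem _ h1 h1
        rw [one_add_one_eq_two] at this
        exact this)
  have hA'skew : ∀ n, (A' n)ᵀ = -(A' n) := by
    intro n
    ext i j
    simp only [hA'def, Matrix.transpose_apply, Matrix.of_apply, Matrix.neg_apply]
    ring
  have hA'T : Filter.Tendsto A' Filter.atTop (nhds A) := by
    refine tendsto_pi_nhds.2 ?_
    intro i
    rw [tendsto_pi_nhds]
    intro j
    have hlim : Filter.Tendsto (fun n => (b i j n - b j i n) / 2) Filter.atTop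
        (nhds ((A i j - A j i) / 2)) := ((hbT i j).sub (hbT j i)).div_const 2
    have hAji : A j i = -A i j := by
      have := congrFun (congrFun hskewA j) i
      simp only [Matrix.transpose_apply, Matrix.neg_apply] at this
      -- this : A i j = -A j i
      linarith
    rw [hAji] at hlim
    have : (A i j - -A i j) / 2 = A i j := by ring
    rw [this] at hlim
    exact hlim
  -- the Cayley map, continuous at `A`
  set Φ : Matrix (Fin 5) (Fin 5) ℝ → Matrix (Fin 5) (Fin 5) ℝ :=
    fun B => D * ((1 - Jphi⁻¹ * B) * (1 + Jphi⁻¹ * B)⁻¹) with hΦdef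
  have hΦeq : Φ = fun B => D * ((1 - Jphi⁻¹ * B) *
      ((1 + Jphi⁻¹ * B).det⁻¹ • (1 + Jphi⁻¹ * B).adjugate)) := by
    funext B
    rw [hΦdef]
    simp only [Matrix.inv_def, Ring.inverse_eq_inv]
  have hdetSA : (1 + Jphi⁻¹ * A).det ≠ 0 := by
    rw [hJA]
    exact hdetS.ne_zero
  have hcontJ : Continuous fun B : Matrix (Fin 5) (Fin 5) ℝ => 1 + Jphi⁻¹ * B :=
    continuous_const.add (continuous_const.matrix_mul continuous_id)
  have hΦcont : ContinuousAt Φ A := by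
    rw [hΦeq]
    refine ContinuousAt.mul continuousAt_const ?_
    refine ContinuousAt.mul ?_ ?_
    · exact (continuous_const.sub (continuous_const.matrix_mul continuous_id)).continuousAt
    · exact ContinuousAt.smul ((hcontJ.matrix_det.continuousAt).inv₀ hdetSA)
        hcontJ.matrix_adjugate.continuousAt
  have hΦA : Φ A = g := by
    rw [hΦdef]
    simp only [hJA]
    rw [hcS, hg₁def, ← Matrix.mul_assoc, hD2, one_mul]
  have htend : Filter.Tendsto (fun n => Φ (A' n)) Filter.atTop (nhds g) := by
    rw [← hΦA]
    exact hΦcont.tendsto.comp hA'T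
  -- eventually the approximations are genuinely invertible
  have hdetcont : Filter.Tendsto (fun n => (1 + Jphi⁻¹ * A' n).det) Filter.atTop
      (nhds ((1 + Jphi⁻¹ * A).det)) :=
    (hcontJ.matrix_det.continuousAt.tendsto).comp hA'T
  have hev : ∀ᶠ n in Filter.atTop, (1 + Jphi⁻¹ * A' n).det ≠ 0 :=
    hdetcont.eventually_ne hdetSA
  refine mem_closure_of_tendsto htend (hev.mono fun n hn => ?_)
  -- each approximation lies in the `ℚ(√5)`-points of the orthogonal group
  set Sn := Jphi⁻¹ * A' n with hSndef
  have hSnskew : Snᵀ * Jphi = -(Jphi * Sn) := by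
    rw [hSndef, Matrix.transpose_mul, Jphi_inv_symm, Matrix.mul_assoc, Jphi_inv_mul, mul_one,
      hA'skew n, ← Matrix.mul_assoc, Jphi_mul_inv, one_mul]
  have horth : ((1 - Sn) * (1 + Sn)⁻¹)ᵀ * Jphi * ((1 - Sn) * (1 + Sn)⁻¹) = Jphi :=
    cayley_orthogonal hSnskew (isUnit_iff_ne_zero.2 hn)
  have hDK : MK D := by
    intro i j
    rw [hDdef, Matrix.diagonal_apply]
    split
    · rcases hd i with h | h <;> rw [h]
      · exact Subfield.one_mem _
      · exact Subfield.neg_mem _ (Subfield.one_mem _)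
    · exact Subfield.zero_mem _
  have hSnK : MK Sn := MK.mul MK.Jmat.inv (hA'K n)
  have hK : MK (Φ (A' n)) := by
    have hΦn : Φ (A' n) = D * ((1 - Sn) * (1 + Sn)⁻¹) := rfl
    rw [hΦn]
    exact MK.mul hDK (MK.mul (MK.one.sub hSnK) (MK.one.add hSnK).inv)
  exact ⟨sign_mul_orthogonal hd horth, hK⟩
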